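/- Let i₁ < j₁ and i₂ < j₂ be four pairwise distinct indices of Fin n with i₁ < i₂, and let π = Equiv.swap i₁ j₁ ∘ Equiv.swap i₂ j₂ be the product of the two disjoint transpositions. Then for every assignment σ : Fin n → Bool, the permutation predicate PP(π)(σ) holds if and only if σ i₁ ≤ σ j₁ and (σ i₁ = σ j₁ → σ i₂ ≤ σ j₂). -/
import Mathlib


/-- Crawford's permutation predicate `PP(π)(σ)`. -/
def PP {n : ℕ} (π : Equiv.Perm (Fin n)) (σ : Fin n → Bool) : Prop :=
  ∀ k : Fin n, (∀ l, l < k → σ l = σ (π l)) → σ k ≤ σ (π k)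

/-- For a product of two disjoint transpositions `π = (i₁ j₁)(i₂ j₂)` with
`i₁ < j₁`, `i₂ < j₂`, all four indices pairwise distinct and `i₁ < i₂`,
the permutation predicate `PP(π)(σ)` holds iff
`σ i₁ ≤ σ j₁` and `(σ i₁ = σ j₁ → σ i₂ ≤ σ j₂)`. -/
theorem stmt_9 {n : ℕ} (i₁ j₁ i₂ j₂ : Fin n)
    (h₁ : i₁ < j₁) (h₂ : i₂ < j₂) (h₁₂ : i₁ < i₂)
    (hj₁i₂ : j₁ ≠ i₂) (hj₁j₂ : j₁ ≠ j₂) (hi₁j₂ : i₁ ≠ j₂)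
    (σ : Fin n → Bool) :
    PP (Equiv.swap i₁ j₁ * Equiv.swap i₂ j₂) σ ↔
      (σ i₁ ≤ σ j₁ ∧ (σ i₁ = σ j₁ → σ i₂ ≤ σ j₂)) := by
  have hi₁i₂ : i₁ ≠ i₂ := ne_of_lt h₁₂
  have hi₁j₁ : i₁ ≠ j₁ := ne_of_lt h₁
  have hi₂j₂ : i₂ ≠ j₂ := ne_of_lt h₂
  set π := Equiv.swap i₁ j₁ * Equiv.swap i₂ j₂ with hπ
  have hπi₁ : π i₁ = j₁ := by
    simp [hπ, Equiv.Perm.mul_apply,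
      Equiv.swap_apply_of_ne_of_ne hi₁i₂ hi₁j₂]
  have hπj₁ : π j₁ = i₁ := by
    simp [hπ, Equiv.Perm.mul_apply,
      Equiv.swap_apply_of_ne_of_ne hj₁i₂ hj₁j₂]
  have hπi₂ : π i₂ = j₂ := by
    simp [hπ, Equiv.Perm.mul_apply,
      Equiv.swap_apply_of_ne_of_ne hi₁j₂.symm hj₁j₂.symm]
  have hπj₂ : π j₂ = i₂ := by
    simp [hπ, Equiv.Perm.mul_apply,
      Equiv.swap_apply_of_ne_of_ne hi₁i₂.symm hj₁i₂.symm]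
  have hfix : ∀ l : Fin n, l ≠ i₁ → l ≠ j₁ → l ≠ i₂ → l ≠ j₂ → π l = l := by
    intro l h1 h2 h3 h4
    simp [hπ, Equiv.Perm.mul_apply,
      Equiv.swap_apply_of_ne_of_ne h3 h4,
      Equiv.swap_apply_of_ne_of_ne h1 h2]
  constructor
  · intro hPP
    have hA : σ i₁ ≤ σ j₁ := by
      have := hPP i₁ (fun l hl => by
        rw [hfix l (ne_of_lt hl) (ne_of_lt (hl.trans h₁)) (ne_of_lt (hl.trans h₁₂))
          (ne_of_lt (hl.trans (h₁₂.trans h₂)))])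
      rwa [hπi₁] at this
    refine ⟨hA, fun heq => ?_⟩
    have := hPP i₂ (fun l hl => by
      rcases eq_or_ne l i₁ with rfl | hli₁
      · rw [hπi₁]; exact heq
      rcases eq_or_ne l j₁ with rfl | hlj₁
      · rw [hπj₁]; exact heq.symm
      rw [hfix l hli₁ hlj₁ (ne_of_lt hl) (ne_of_lt (hl.trans h₂))])
    rwa [hπi₂] at this
  · rintro ⟨hA, hB⟩ k hk
    rcases eq_or_ne k i₁ with rfl | hk₁
    · rwa [hπi₁]
    rcases eq_or_ne k j₁ with rfl | hk₂
    · rw [hπj₁]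
      have := hk i₁ h₁
      rw [hπi₁] at this
      exact le_of_eq this.symm
    rcases eq_or_ne k i₂ with rfl | hk₃
    · rw [hπi₂]
      have := hk i₁ h₁₂
      rw [hπi₁] at this
      exact hB this
    rcases eq_or_ne k j₂ with rfl | hk₄
    · rw [hπj₂]
      have := hk i₂ h₂
      rw [hπi₂] at this
      exact le_of_eq this.symm
    · rw [hfix k hk₁ hk₂ hk₃ hk₄]
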